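/- Let φ : ℝ → ℂ² be a differentiable curve of unit spinors (conj(φ(s))ᵗφ(s) = 1 for all s), let κ, τ : ℝ → ℝ be functions, and define T, N, B : ℝ → ℝ³ by N(s) + iB(s) = φ(s)ᵗσφ(s) and T(s) = −φ̂(s)ᵗσφ(s). Then the Frenet equations of an arc-length curve in the Lie group S³ (where τ_G = 1), namely T′ = κN, N′ = −κT + (τ − 1)B, B′ = −(τ − 1)N, hold for all s if and only if φ′(s) = −i((τ(s) − 1)/2)·φ(s) + (κ(s)/2)·φ̂(s) for all s. -/

import Mathlib

/-!
Write `Z = N + iB = φᵗσφ`. The `N`- and `B`-equations together say `Z' = -κT - i(τ - 1)Z`.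
Since `Z' = 2φᵗσφ'` and `T = -φ̂ᵗσφ = -φᵗσφ̂`, this is `φᵗσφ' = φᵗσF` for
`F = -i((τ - 1)/2)φ + (κ/2)φ̂`, and `ψ ↦ φᵗσψ` is injective for `φ ≠ 0`: its components give
`φ₁ψ₁ = φ₂ψ₂ = φ₁ψ₂ + φ₂ψ₁ = 0`, hence `φⱼ²ψₖ = 0`. The `T`-equation then comes for free:
differentiating `T = -φ̂ᵗσφ` along `φ' = F` gives `κ Re Z = κN`, because
`φ̂ᵗσφ̂ = -conj (φᵗσφ)` and the coefficient of `φ` in `F` is purely imaginary.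
-/

open Complex ComplexConjugate

namespace Spinor

/-- `sigma φ ψ = φᵗσψ`, the components taken along `σ₁, σ₂, σ₃`. -/
def sigma (φ ψ : ℂ × ℂ) : Fin 3 → ℂ :=
  ![φ.1 * ψ.1 - φ.2 * ψ.2, I * (φ.1 * ψ.1 + φ.2 * ψ.2), -(φ.1 * ψ.2 + φ.2 * ψ.1)]

def mate (φ : ℂ × ℂ) : ℂ × ℂ := (-conj φ.2, conj φ.1)

/-- The right-hand side `-i(m/2)φ + (κ/2)φ̂` of the spinor Frenet equation; in `S³`,
`m = τ - τ_G = τ - 1`. -/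
noncomputable def frenetField (κ m : ℝ) (φ : ℂ × ℂ) : ℂ × ℂ :=
  (-I * (m / 2)) • φ + (κ / 2 : ℂ) • mate φ

lemma sigma_comm (φ ψ : ℂ × ℂ) : sigma φ ψ = sigma ψ φ := by
  ext i; fin_cases i <;> simp [sigma] <;> ring

lemma sigma_sub_right (φ ψ χ : ℂ × ℂ) : sigma φ (ψ - χ) = sigma φ ψ - sigma φ χ := by
  ext i; fin_cases i <;> simp [sigma] <;> ring

lemma eq_zero_of_sigma_eq_zero {φ ψ : ℂ × ℂ} (hφ : φ ≠ 0) (h : sigma φ ψ = 0) : ψ = 0 := by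
  obtain ⟨p, q⟩ := φ
  obtain ⟨u, v⟩ := ψ
  have h₀ := congrFun h 0
  have h₁ := congrFun h 1
  have h₂ := congrFun h 2
  simp only [sigma, Matrix.cons_val, Pi.zero_apply, mul_eq_zero, I_ne_zero, false_or,
    neg_eq_zero] at h₀ h₁ h₂
  have hpu : p * u = 0 := by linear_combination (h₀ + h₁) / 2
  have hqv : q * v = 0 := by linear_combination (h₁ - h₀) / 2
  have hu : p ^ 2 * u = 0 ∧ q ^ 2 * u = 0 :=
    ⟨by linear_combination p * hpu, by linear_combination q * h₂ - p * hqv⟩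
  have hv : p ^ 2 * v = 0 ∧ q ^ 2 * v = 0 :=
    ⟨by linear_combination p * h₂ - q * hpu, by linear_combination q * hqv⟩
  by_cases hp : p = 0
  · have hq : q ≠ 0 := fun hq => hφ (by simp [hp, hq])
    simp_all
  · simp_all

lemma sigma_right_injective {φ : ℂ × ℂ} (hφ : φ ≠ 0) : Function.Injective (sigma φ) :=
  fun ψ χ h => sub_eq_zero.1 <| eq_zero_of_sigma_eq_zero hφ <| by rw [sigma_sub_right, h, sub_self]

lemma two_mul_sigma_frenetField (κ m : ℝ) (φ : ℂ × ℂ) (i : Fin 3) :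
    2 * sigma φ (frenetField κ m φ) i = -I * m * sigma φ φ i + κ * sigma (mate φ) φ i := by
  fin_cases i <;> simp [sigma, frenetField, mate] <;> ring

lemma sigma_mate_frenetField_add (κ m : ℝ) (φ : ℂ × ℂ) (i : Fin 3) :
    sigma (mate (frenetField κ m φ)) φ i + sigma (mate φ) (frenetField κ m φ) i =
      -(κ * (sigma φ φ i).re : ℝ) := by
  push_cast
  rw [re_eq_add_conj]
  fin_cases i <;> simp [sigma, frenetField, mate, map_ofNat] <;> ring

lemma hasDerivAt_sigma {φ ψ : ℝ → ℂ × ℂ} {φ' ψ' : ℂ × ℂ} {t : ℝ} (hφ : HasDerivAt φ φ' t)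
    (hψ : HasDerivAt ψ ψ' t) (i : Fin 3) :
    HasDerivAt (fun t => sigma (φ t) (ψ t) i) (sigma φ' (ψ t) i + sigma (φ t) ψ' i) t := by
  have h₁ := (ContinuousLinearMap.fst ℝ ℂ ℂ).hasFDerivAt.comp_hasDerivAt t hφ
  have h₂ := (ContinuousLinearMap.snd ℝ ℂ ℂ).hasFDerivAt.comp_hasDerivAt t hφ
  have k₁ := (ContinuousLinearMap.fst ℝ ℂ ℂ).hasFDerivAt.comp_hasDerivAt t hψ
  have k₂ := (ContinuousLinearMap.snd ℝ ℂ ℂ).hasFDerivAt.comp_hasDerivAt t hψ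
  simp only [Function.comp_def, ContinuousLinearMap.coe_fst', ContinuousLinearMap.coe_snd']
    at h₁ h₂ k₁ k₂
  fin_cases i <;> simp only [sigma, Fin.zero_eta, Fin.mk_one, Fin.reduceFinMk, Matrix.cons_val]
  · exact ((h₁.mul k₁).sub (h₂.mul k₂)).congr_deriv (by ring)
  · exact (((h₁.mul k₁).add (h₂.mul k₂)).const_mul I).congr_deriv (by ring)
  · exact ((h₁.mul k₂).add (h₂.mul k₁)).neg.congr_deriv (by ring)

lemma hasDerivAt_mate {φ : ℝ → ℂ × ℂ} {φ' : ℂ × ℂ} {t : ℝ} (hφ : HasDerivAt φ φ' t) :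
    HasDerivAt (fun t => mate (φ t)) (mate φ') t :=
  ((ContinuousLinearMap.snd ℝ ℂ ℂ).hasFDerivAt.comp_hasDerivAt t hφ).star.neg.prodMk
    ((ContinuousLinearMap.fst ℝ ℂ ℂ).hasFDerivAt.comp_hasDerivAt t hφ).star

lemma _root_.HasDerivAt.complex_re {f : ℝ → ℂ} {f' : ℂ} {t : ℝ} (h : HasDerivAt f f' t) :
    HasDerivAt (fun t => (f t).re) f'.re t :=
  reCLM.hasFDerivAt.comp_hasDerivAt t h

lemma _root_.HasDerivAt.complex_im {f : ℝ → ℂ} {f' : ℂ} {t : ℝ} (h : HasDerivAt f f' t) :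
    HasDerivAt (fun t => (f t).im) f'.im t :=
  imCLM.hasFDerivAt.comp_hasDerivAt t h

lemma frenet_normal_binormal_iff (n b x κ m : ℝ) (z' : ℂ) :
    (z'.re = -κ * x + m * b ∧ z'.im = -m * n) ↔ z' = -κ * x - I * m * (n + I * b) := by
  simp [Complex.ext_iff]

section Frenet

variable {φ : ℝ → ℂ × ℂ} {κ m : ℝ → ℝ} {T N B : ℝ → Fin 3 → ℝ}

theorem normal_binormal_frenet_iff (hφ : Differentiable ℝ φ) (hφ₀ : ∀ s, φ s ≠ 0)
    (hNB : ∀ s i, (N s i : ℂ) + I * B s i = sigma (φ s) (φ s) i)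
    (hT : ∀ s i, (T s i : ℂ) = -sigma (mate (φ s)) (φ s) i) :
    ((∀ s i, deriv (fun t => N t i) s = -κ s * T s i + m s * B s i) ∧
      (∀ s i, deriv (fun t => B t i) s = -m s * N s i)) ↔
    ∀ s, deriv φ s = frenetField (κ s) (m s) (φ s) := by
  have hZ : ∀ s i, HasDerivAt (fun t => (N t i : ℂ) + I * B t i)
      (2 * sigma (φ s) (deriv φ s) i) s := by
    intro s i
    simp_rw [hNB]
    convert hasDerivAt_sigma (hφ s).hasDerivAt (hφ s).hasDerivAt i using 1
    rw [sigma_comm]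
    ring
  have hN : ∀ s i, deriv (fun t => N t i) s = (2 * sigma (φ s) (deriv φ s) i).re := fun s i => by
    simpa using (hZ s i).complex_re.deriv
  have hB : ∀ s i, deriv (fun t => B t i) s = (2 * sigma (φ s) (deriv φ s) i).im := fun s i => by
    simpa using (hZ s i).complex_im.deriv
  have hF : ∀ s i, -(κ s : ℂ) * -sigma (mate (φ s)) (φ s) i - I * m s * sigma (φ s) (φ s) i =
      2 * sigma (φ s) (frenetField (κ s) (m s) (φ s)) i := fun s i => by
    rw [two_mul_sigma_frenetField]; ring
  calc
    _ ↔ ∀ s i, 2 * sigma (φ s) (deriv φ s) i =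
        2 * sigma (φ s) (frenetField (κ s) (m s) (φ s)) i := by
      simp only [hN, hB, ← forall_and, frenet_normal_binormal_iff, hNB, hT, hF]
    _ ↔ _ := forall_congr' fun s => by
      simp only [mul_right_inj' (two_ne_zero' ℂ), ← funext_iff,
        (sigma_right_injective (hφ₀ s)).eq_iff]

theorem tangent_frenet_of_spinor_frenet (hφ : ∀ s, HasDerivAt φ (frenetField (κ s) (m s) (φ s)) s)
    (hNB : ∀ s i, (N s i : ℂ) + I * B s i = sigma (φ s) (φ s) i)
    (hT : ∀ s i, (T s i : ℂ) = -sigma (mate (φ s)) (φ s) i) (s : ℝ) (i : Fin 3) :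
    deriv (fun t => T t i) s = κ s * N s i := by
  have hTre : (fun t => T t i) = fun t => (-sigma (mate (φ t)) (φ t) i).re :=
    funext fun t => by rw [← hT, ofReal_re]
  have hNre : N s i = (sigma (φ s) (φ s) i).re := by
    rw [← hNB]; simp
  have hder : HasDerivAt (fun t => (-sigma (mate (φ t)) (φ t) i).re)
      (-(sigma (mate (frenetField (κ s) (m s) (φ s))) (φ s) i +
        sigma (mate (φ s)) (frenetField (κ s) (m s) (φ s)) i)).re s :=
    (hasDerivAt_sigma (hasDerivAt_mate (hφ s)) (hφ s) i).neg.complex_re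
  rw [hTre, hder.deriv, sigma_mate_frenetField_add, hNre]
  simp

theorem frenet_iff_spinor_frenet (hφ : Differentiable ℝ φ) (hφ₀ : ∀ s, φ s ≠ 0)
    (hNB : ∀ s i, (N s i : ℂ) + I * B s i = sigma (φ s) (φ s) i)
    (hT : ∀ s i, (T s i : ℂ) = -sigma (mate (φ s)) (φ s) i) :
    ((∀ s i, deriv (fun t => T t i) s = κ s * N s i) ∧
      (∀ s i, deriv (fun t => N t i) s = -κ s * T s i + m s * B s i) ∧
      (∀ s i, deriv (fun t => B t i) s = -m s * N s i)) ↔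
    ∀ s, deriv φ s = frenetField (κ s) (m s) (φ s) := by
  rw [← normal_binormal_frenet_iff hφ hφ₀ hNB hT]
  refine ⟨And.right, fun h => ⟨tangent_frenet_of_spinor_frenet (m := m) (fun s => ?_) hNB hT, h⟩⟩
  rw [← (normal_binormal_frenet_iff hφ hφ₀ hNB hT).1 h s]
  exact (hφ s).hasDerivAt

end Frenet

end Spinor

/-- Spinor Frenet equation in the Lie group S³ (τ_G = 1): the Frenet equations T′ = κN, N′ = −κT + (τ − 1)B, B′ = −(τ − 1)N hold iff φ′ = −i((τ − 1)/2)φ + (κ/2)φ̂. -/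
theorem spinor_frenet_S3 (φ₁ φ₂ : ℝ → ℂ) (κ τ : ℝ → ℝ)
    (T N B : ℝ → Fin 3 → ℝ)
    (hd₁ : Differentiable ℝ φ₁) (hd₂ : Differentiable ℝ φ₂)
    (hunit : ∀ s, (starRingEnd ℂ) (φ₁ s) * φ₁ s + (starRingEnd ℂ) (φ₂ s) * φ₂ s = 1)
    (hNB : ∀ s i, (N s i : ℂ) + Complex.I * (B s i : ℂ) =
      ![φ₁ s ^ 2 - φ₂ s ^ 2, Complex.I * (φ₁ s ^ 2 + φ₂ s ^ 2),
        -2 * φ₁ s * φ₂ s] i)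
    (hT : ∀ s i, (T s i : ℂ) =
      ![φ₁ s * (starRingEnd ℂ) (φ₂ s) + (starRingEnd ℂ) (φ₁ s) * φ₂ s,
        Complex.I * ((starRingEnd ℂ) (φ₂ s) * φ₁ s - (starRingEnd ℂ) (φ₁ s) * φ₂ s),
        ((‖φ₁ s‖ ^ 2 - ‖φ₂ s‖ ^ 2 : ℝ) : ℂ)] i) :
    ((∀ s i, deriv (fun t => T t i) s = κ s * N s i) ∧
     (∀ s i, deriv (fun t => N t i) s = -(κ s) * T s i + (τ s - 1) * B s i) ∧
     (∀ s i, deriv (fun t => B t i) s = -(τ s - 1) * N s i)) ↔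
    ((∀ s, deriv φ₁ s =
        -Complex.I * ((τ s - 1 : ℝ) / 2) * φ₁ s + (κ s / 2) * (-(starRingEnd ℂ) (φ₂ s))) ∧
     (∀ s, deriv φ₂ s =
        -Complex.I * ((τ s - 1 : ℝ) / 2) * φ₂ s + (κ s / 2) * ((starRingEnd ℂ) (φ₁ s)))) := by
  set φ : ℝ → ℂ × ℂ := fun t => (φ₁ t, φ₂ t)
  have hφ : ∀ s, HasDerivAt φ (deriv φ₁ s, deriv φ₂ s) s := fun s =>
    (hd₁ s).hasDerivAt.prodMk (hd₂ s).hasDerivAt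
  have hφ₀ : ∀ s, φ s ≠ 0 := fun s h => by
    simp only [φ, Prod.mk_eq_zero] at h
    simpa [h] using hunit s
  have hNB' : ∀ s i, (N s i : ℂ) + I * B s i = Spinor.sigma (φ s) (φ s) i := fun s i => by
    rw [hNB]; fin_cases i <;> simp [Spinor.sigma, φ] <;> ring
  have hT' : ∀ s i, (T s i : ℂ) = -Spinor.sigma (Spinor.mate (φ s)) (φ s) i := fun s i => by
    rw [hT]; fin_cases i <;> simp [Spinor.sigma, Spinor.mate, φ, ← conj_mul'] <;> ring
  rw [Spinor.frenet_iff_spinor_frenet (κ := κ) (m := fun s => τ s - 1)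
    (fun s => (hφ s).differentiableAt) hφ₀ hNB' hT']
  simp only [(hφ _).deriv, Spinor.frenetField, Spinor.mate, φ, Prod.ext_iff, forall_and,
    Prod.fst_add, Prod.snd_add, Prod.smul_mk, smul_eq_mul]
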